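/- Let G, H : ℝ^n → ℝ^m be continuous, let S = {x ∈ ℝ^n : G(x) ≥ 0, H(x) ≥ 0, G(x)ᵀH(x) = 0} and, for σ > 0, S_σ = {x ∈ ℝ^n : G(x) ≥ 0, H(x) ≥ 0, G(x)ᵀH(x) ≤ σ}. Let ν > 0, let {σ_k} be a sequence of positive numbers with σ_k → 0, and for each k let x_k be a global minimizer of Φ_ν over S_{σ_k}. If x_k → x*, then x* ∈ S and Φ_ν(x*) ≤ Φ_ν(y) for every y ∈ S; that is, x* is a global minimizer of Φ_ν over S. -/

import Mathlib

open scoped BigOperators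

/-- Capped-ℓ1 surrogate `Φ_ν(x) = ∑ᵢ min{1, |xᵢ|/ν}`. -/
noncomputable def Phi {n : ℕ} (ν : ℝ) (x : Fin n → ℝ) : ℝ :=
  ∑ i, min 1 (|x i| / ν)

open Filter Topology

theorem continuous_Phi {n : ℕ} (ν : ℝ) : Continuous (Phi (n := n) ν) :=
  continuous_finsetSum _ fun _ _ => continuous_const.min (by fun_prop)

theorem IsMinOn.of_tendsto_of_subset {ι X β : Type*} [TopologicalSpace X] [Preorder β]
    [TopologicalSpace β] [OrderClosedTopology β] {l : Filter ι} [l.NeBot] {f : X → β}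
    (hf : Continuous f) {S : Set X} {T : ι → Set X} (hST : ∀ k, S ⊆ T k) {x : ι → X} {x₀ : X}
    (hx : Tendsto x l (𝓝 x₀)) (hmin : ∀ k, IsMinOn f (T k) (x k)) : IsMinOn f S x₀ :=
  fun _ hy => le_of_tendsto_of_tendsto' ((hf.tendsto x₀).comp hx) tendsto_const_nhds
    fun k => hmin k (hST k hy)

theorem complementarity_of_tendsto {ι X : Type*} [TopologicalSpace X] {m : ℕ}
    {G H : X → Fin m → ℝ} (hG : Continuous G) (hH : Continuous H) {l : Filter ι} [l.NeBot]
    {σ : ι → ℝ} (hσ : Tendsto σ l (𝓝 0)) {x : ι → X} {x₀ : X} (hx : Tendsto x l (𝓝 x₀))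
    (hfeas : ∀ k, (∀ i, 0 ≤ G (x k) i) ∧ (∀ i, 0 ≤ H (x k) i) ∧
      ∑ i, G (x k) i * H (x k) i ≤ σ k) :
    (∀ i, 0 ≤ G x₀ i) ∧ (∀ i, 0 ≤ H x₀ i) ∧ ∑ i, G x₀ i * H x₀ i = 0 := by
  have hGx : Tendsto (fun k => G (x k)) l (𝓝 (G x₀)) := (hG.tendsto x₀).comp hx
  have hHx : Tendsto (fun k => H (x k)) l (𝓝 (H x₀)) := (hH.tendsto x₀).comp hx
  have hG₀ : ∀ i, 0 ≤ G x₀ i := fun i =>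
    ge_of_tendsto (tendsto_pi_nhds.mp hGx i) (Eventually.of_forall fun k => (hfeas k).1 i)
  have hH₀ : ∀ i, 0 ≤ H x₀ i := fun i =>
    ge_of_tendsto (tendsto_pi_nhds.mp hHx i) (Eventually.of_forall fun k => (hfeas k).2.1 i)
  have hsum : Tendsto (fun k => ∑ i, G (x k) i * H (x k) i) l
      (𝓝 (∑ i, G x₀ i * H x₀ i)) :=
    tendsto_finsetSum _ fun i _ => (tendsto_pi_nhds.mp hGx i).mul (tendsto_pi_nhds.mp hHx i)
  refine ⟨hG₀, hH₀, le_antisymm ?_ ?_⟩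
  · exact le_of_tendsto_of_tendsto' hsum hσ fun k => (hfeas k).2.2
  · exact Finset.sum_nonneg fun i _ => mul_nonneg (hG₀ i) (hH₀ i)

theorem stmt_1_general {n m : ℕ}
    (G H : (Fin n → ℝ) → Fin m → ℝ)
    (hG : Continuous G) (hH : Continuous H)
    (S : Set (Fin n → ℝ))
    (hS : S = {x | (∀ i, 0 ≤ G x i) ∧ (∀ i, 0 ≤ H x i) ∧ ∑ i, G x i * H x i = 0})
    (Sσ : ℝ → Set (Fin n → ℝ))
    (hSσ : ∀ σ, Sσ σ = {x | (∀ i, 0 ≤ G x i) ∧ (∀ i, 0 ≤ H x i) ∧ ∑ i, G x i * H x i ≤ σ})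
    (ν : ℝ)
    (σ : ℕ → ℝ) (hσpos : ∀ k, 0 < σ k)
    (hσ0 : Filter.Tendsto σ Filter.atTop (nhds 0))
    (x : ℕ → (Fin n → ℝ))
    (hxmem : ∀ k, x k ∈ Sσ (σ k))
    (hxmin : ∀ k, ∀ y ∈ Sσ (σ k), Phi ν (x k) ≤ Phi ν y)
    (xstar : Fin n → ℝ)
    (hconv : Filter.Tendsto x Filter.atTop (nhds xstar)) :
    xstar ∈ S ∧ ∀ y ∈ S, Phi ν xstar ≤ Phi ν y := by
  have hSsub : ∀ k, S ⊆ Sσ (σ k) := fun k y hy => by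
    rw [hS] at hy
    rw [hSσ]
    exact ⟨hy.1, hy.2.1, hy.2.2.trans_le (hσpos k).le⟩
  simp only [hSσ] at hxmem
  exact ⟨hS ▸ complementarity_of_tendsto hG hH hσ0 hconv hxmem,
    IsMinOn.of_tendsto_of_subset (continuous_Phi ν) hSsub hconv hxmin⟩

theorem stmt_1 {n m : ℕ}
    (G H : (Fin n → ℝ) → Fin m → ℝ)
    (hG : Continuous G) (hH : Continuous H)
    (S : Set (Fin n → ℝ))
    (hS : S = {x | (∀ i, 0 ≤ G x i) ∧ (∀ i, 0 ≤ H x i) ∧ ∑ i, G x i * H x i = 0})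
    (Sσ : ℝ → Set (Fin n → ℝ))
    (hSσ : ∀ σ, Sσ σ = {x | (∀ i, 0 ≤ G x i) ∧ (∀ i, 0 ≤ H x i) ∧ ∑ i, G x i * H x i ≤ σ})
    (ν : ℝ) (hν : 0 < ν)
    (σ : ℕ → ℝ) (hσpos : ∀ k, 0 < σ k)
    (hσ0 : Filter.Tendsto σ Filter.atTop (nhds 0))
    (x : ℕ → (Fin n → ℝ))
    (hxmem : ∀ k, x k ∈ Sσ (σ k))
    (hxmin : ∀ k, ∀ y ∈ Sσ (σ k), Phi ν (x k) ≤ Phi ν y)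
    (xstar : Fin n → ℝ)
    (hconv : Filter.Tendsto x Filter.atTop (nhds xstar)) :
    xstar ∈ S ∧ ∀ y ∈ S, Phi ν xstar ≤ Phi ν y :=
  stmt_1_general G H hG hH S hS Sσ hSσ ν σ hσpos hσ0 x hxmem hxmin xstar hconv
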